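/- Let 0 < p < ∞ and 0 < r < 1, fixed. Suppose g, h : [−π, π] → ℝ are integrable and the Baernstein star-functions satisfy g*(θ) ≤ h*(θ) for all θ ∈ [0, π]. Then ∫_{−π}^{π} e^{p g(x)} dx ≤ ∫_{−π}^{π} e^{p h(x)} dx. -/

import Mathlib

/-!
Write `exp (p a) = ∫ p² exp (p s) (a - s)₊ ds`. By Tonelli, `∫ exp (p g)` becomes
`∫ p² exp (p s) (∫ (g - s)₊) ds`, so it suffices to compare `∫ (g - s)₊` with `∫ (h - s)₊`
for each level `s`. With `E = {g > s}` and `|E| = 2θ` we have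
`∫ (g - s)₊ = ∫_E g - 2θ s ≤ g*(θ) - 2θ s`, while every `F` with `|F| = 2θ` has
`∫_F h - 2θ s ≤ ∫ (h - s)₊`, so `h*(θ) - 2θ s ≤ ∫ (h - s)₊`.
-/

open Real MeasureTheory

/-- The Baernstein star-function of `g`. -/
noncomputable def starFn (g : ℝ → ℝ) (θ : ℝ) : ℝ :=
  sSup {y : ℝ | ∃ E : Set ℝ, MeasurableSet E ∧ E ⊆ Set.Icc (-π) π ∧
    volume E = ENNReal.ofReal (2 * θ) ∧ y = ∫ x in E, g x}

open Set

lemma integral_Ioi_mul_exp_neg_mul {p : ℝ} (hp : 0 < p) :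
    ∫ u in Ioi 0, u * exp (-(p * u)) = 1 / p ^ 2 := by
  have := integral_rpow_mul_exp_neg_mul_Ioi two_pos hp
  norm_num [Real.Gamma_two] at this
  simpa [one_div] using this

lemma integrableOn_Ioi_mul_exp_neg_mul {p : ℝ} (hp : 0 < p) :
    IntegrableOn (fun u : ℝ => u * exp (-(p * u))) (Ioi 0) := by
  refine (integrableOn_rpow_mul_exp_neg_mul_rpow (s := 1) (by norm_num) one_pos hp).congr_fun
    (fun u _ => ?_) measurableSet_Ioi
  simp

lemma lintegral_ofReal_mul_exp_neg_mul {p : ℝ} (hp : 0 < p) :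
    ∫⁻ u, ENNReal.ofReal (max u 0 * exp (-(p * u))) = ENNReal.ofReal (1 / p ^ 2) := by
  rw [← integral_Ioi_mul_exp_neg_mul hp, ofReal_integral_eq_lintegral_ofReal
    (integrableOn_Ioi_mul_exp_neg_mul hp) ((ae_restrict_iff' measurableSet_Ioi).2
      (ae_of_all _ fun u (hu : 0 < u) => by positivity)), ← lintegral_indicator measurableSet_Ioi]
  congr 1 with u
  rcases le_or_gt u 0 with hu | hu
  · simp [hu, not_lt.2 hu]
  · simp [hu, hu.le]

lemma ofReal_exp_mul_eq_lintegral {p : ℝ} (hp : 0 < p) (a : ℝ) :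
    ENNReal.ofReal (exp (p * a)) =
      ∫⁻ s, ENNReal.ofReal (p ^ 2 * exp (p * s) * max (a - s) 0) := by
  rw [← lintegral_sub_left_eq_self _ a]
  have (u : ℝ) : p ^ 2 * exp (p * (a - u)) * max (a - (a - u)) 0 =
      p ^ 2 * exp (p * a) * (max u 0 * exp (-(p * u))) := by
    rw [sub_sub_cancel, mul_sub, sub_eq_add_neg, exp_add]; ring
  simp_rw [this, ENNReal.ofReal_mul (by positivity : 0 ≤ p ^ 2 * exp (p * a))]
  rw [lintegral_const_mul' _ _ ENNReal.ofReal_ne_top, lintegral_ofReal_mul_exp_neg_mul hp,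
    ← ENNReal.ofReal_mul (by positivity)]
  field_simp

lemma lintegral_ofReal_exp_mul_eq {α : Type*} [MeasurableSpace α] {μ : Measure α} [SFinite μ]
    {f : α → ℝ} (hf : AEMeasurable f μ) {p : ℝ} (hp : 0 < p) :
    ∫⁻ x, ENNReal.ofReal (exp (p * f x)) ∂μ =
      ∫⁻ s, ENNReal.ofReal (p ^ 2 * exp (p * s)) *
        ∫⁻ x, ENNReal.ofReal (max (f x - s) 0) ∂μ := by
  simp_rw [ofReal_exp_mul_eq_lintegral hp]
  rw [lintegral_lintegral_swap (by fun_prop)]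
  refine lintegral_congr fun s => ?_
  rw [← lintegral_const_mul' _ _ ENNReal.ofReal_ne_top]
  simp_rw [ENNReal.ofReal_mul (by positivity : 0 ≤ p ^ 2 * exp (p * s))]

section PositivePart

variable {α : Type*} [MeasurableSpace α] {μ : Measure α} {f : α → ℝ} {s t : Set α}

lemma setIntegral_sub_const (hf : IntegrableOn f s μ) (hs : μ s ≠ ⊤) (c : ℝ) :
    ∫ x in s, (f x - c) ∂μ = ∫ x in s, f x ∂μ - μ.real s * c := by
  rw [integral_sub hf (integrableOn_const hs), setIntegral_const, smul_eq_mul]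

lemma setIntegral_le_setIntegral_max_zero (hf : IntegrableOn f t μ) (hst : s ⊆ t) :
    ∫ x in s, f x ∂μ ≤ ∫ x in t, max (f x) 0 ∂μ :=
  calc ∫ x in s, f x ∂μ ≤ ∫ x in s, max (f x) 0 ∂μ :=
        integral_mono (hf.mono_set hst) (hf.mono_set hst).pos_part fun _ => le_max_left _ _
    _ ≤ ∫ x in t, max (f x) 0 ∂μ :=
        setIntegral_mono_set hf.pos_part (ae_of_all _ fun _ => le_max_right _ _) hst.eventuallyLE

lemma setIntegral_max_zero_eq (hf : Measurable f) (ht : MeasurableSet t) :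
    ∫ x in t, max (f x) 0 ∂μ = ∫ x in t ∩ {x | 0 < f x}, f x ∂μ := by
  rw [setIntegral_eq_of_subset_of_forall_sdiff_eq_zero ht inter_subset_left
    fun x hx => max_eq_right (not_lt.1 fun h => hx.2 ⟨hx.1, h⟩)]
  exact setIntegral_congr_fun (ht.inter (measurableSet_lt measurable_const hf))
    fun x hx => max_eq_left (le_of_lt hx.2)

end PositivePart

section StarFunction

variable {g : ℝ → ℝ}

lemma bddAbove_starFn (hg : IntegrableOn g (Icc (-π) π)) (θ : ℝ) :
    BddAbove {y : ℝ | ∃ E : Set ℝ, MeasurableSet E ∧ E ⊆ Icc (-π) π ∧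
      volume E = ENNReal.ofReal (2 * θ) ∧ y = ∫ x in E, g x} := by
  refine ⟨∫ x in Icc (-π) π, max (g x) 0, ?_⟩
  rintro _ ⟨E, -, hE, -, rfl⟩
  exact setIntegral_le_setIntegral_max_zero hg hE

lemma setIntegral_le_starFn (hg : IntegrableOn g (Icc (-π) π)) {E : Set ℝ}
    (hE : MeasurableSet E) (hEI : E ⊆ Icc (-π) π) :
    ∫ x in E, g x ≤ starFn g ((volume E).toReal / 2) := by
  refine le_csSup (bddAbove_starFn hg _) ⟨E, hE, hEI, ?_, rfl⟩
  rw [mul_div_cancel₀ _ two_ne_zero, ENNReal.ofReal_toReal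
    (measure_mono hEI |>.trans_lt measure_Icc_lt_top).ne]

lemma starFn_congr_ae {g' : ℝ → ℝ} (hgg' : g =ᵐ[volume.restrict (Icc (-π) π)] g') :
    starFn g = starFn g' := by
  ext θ
  unfold starFn
  congr! 3 with y
  refine exists_congr fun E => and_congr_right fun _ => and_congr_right fun hE => ?_
  rw [integral_congr_ae (ae_restrict_of_ae_restrict_of_subset hE hgg')]

lemma starFn_le_integral_max_sub_zero_add (hg : IntegrableOn g (Icc (-π) π)) (s : ℝ) {θ : ℝ}
    (hθ : θ ∈ Icc 0 π) :
    starFn g θ ≤ (∫ x in Icc (-π) π, max (g x - s) 0) + 2 * θ * s := by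
  refine csSup_le ⟨_, Icc (-π) (-π + 2 * θ), measurableSet_Icc,
    Icc_subset_Icc le_rfl (by linarith [hθ.2]), by rw [volume_Icc]; ring_nf, rfl⟩ ?_
  rintro _ ⟨F, -, hF, hFvol, rfl⟩
  have hFfin : volume F ≠ ⊤ := (measure_mono hF |>.trans_lt measure_Icc_lt_top).ne
  have hFreal : volume.real F = 2 * θ := by
    rw [measureReal_def, hFvol, ENNReal.toReal_ofReal (by linarith [hθ.1])]
  have := setIntegral_le_setIntegral_max_zero
    (hg.sub (integrableOn_const measure_Icc_lt_top.ne) : IntegrableOn (fun x => g x - s) _) hF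
  rw [setIntegral_sub_const (hg.mono_set hF) hFfin, hFreal] at this
  linarith

lemma exists_integral_max_sub_zero_add_le_starFn (hg : IntegrableOn g (Icc (-π) π)) (s : ℝ) :
    ∃ θ ∈ Icc 0 π, (∫ x in Icc (-π) π, max (g x - s) 0) + 2 * θ * s ≤ starFn g θ := by
  -- The level set of `g` must be measurable to compete in `starFn g`.
  obtain ⟨g', hg'm, hgg'⟩ := hg.1
  have hg' : IntegrableOn g' (Icc (-π) π) := hg.congr hgg'
  set E := Icc (-π) π ∩ {x | 0 < g' x - s}
  have hEI : E ⊆ Icc (-π) π := inter_subset_left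
  have hE : MeasurableSet E :=
    measurableSet_Icc.inter (measurableSet_lt measurable_const (hg'm.measurable.sub_const s))
  have hEfin : volume E ≠ ⊤ := (measure_mono hEI |>.trans_lt measure_Icc_lt_top).ne
  refine ⟨volume.real E / 2, ⟨by positivity, ?_⟩, ?_⟩
  · have : volume.real E ≤ 2 * π := by
      simpa [measureReal_def, volume_Icc, two_mul, pi_pos.le] using
        measureReal_mono (μ := volume) hEI measure_Icc_lt_top.ne
    linarith
  · have hgg's :
        ∫ x in Icc (-π) π, max (g x - s) 0 = ∫ x in Icc (-π) π, max (g' x - s) 0 :=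
      integral_congr_ae (hgg'.mono fun x hx => by simp only [hx])
    rw [starFn_congr_ae hgg', hgg's,
      setIntegral_max_zero_eq (hg'm.measurable.sub_const s) measurableSet_Icc,
      setIntegral_sub_const (hg'.mono_set hEI) hEfin]
    have := setIntegral_le_starFn hg' hE hEI
    rw [← measureReal_def] at this
    linarith

lemma integral_max_sub_zero_le_of_starFn_le {h : ℝ → ℝ}
    (hg : IntegrableOn g (Icc (-π) π)) (hh : IntegrableOn h (Icc (-π) π))
    (hstar : ∀ θ ∈ Icc (0 : ℝ) π, starFn g θ ≤ starFn h θ) (s : ℝ) :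
    ∫ x in Icc (-π) π, max (g x - s) 0 ≤ ∫ x in Icc (-π) π, max (h x - s) 0 := by
  obtain ⟨θ, hθ, hgθ⟩ := exists_integral_max_sub_zero_add_le_starFn hg s
  linarith [hstar θ hθ, starFn_le_integral_max_sub_zero_add hh s hθ]

end StarFunction

theorem baernstein_star_implies_exp_means (p : ℝ) (hp : 0 < p) (g h : ℝ → ℝ)
    (hg : IntegrableOn g (Set.Icc (-π) π)) (hh : IntegrableOn h (Set.Icc (-π) π))
    (hstar : ∀ θ ∈ Set.Icc (0 : ℝ) π, starFn g θ ≤ starFn h θ) :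
    ∫⁻ x in Set.Icc (-π) π, ENNReal.ofReal (Real.exp (p * g x))
      ≤ ∫⁻ x in Set.Icc (-π) π, ENNReal.ofReal (Real.exp (p * h x)) := by
  rw [lintegral_ofReal_exp_mul_eq hg.aemeasurable hp,
    lintegral_ofReal_exp_mul_eq hh.aemeasurable hp]
  refine lintegral_mono fun s => mul_le_mul_right ?_ _
  have ofReal_integral {f : ℝ → ℝ} (hf : IntegrableOn f (Icc (-π) π)) :
      ENNReal.ofReal (∫ x in Icc (-π) π, max (f x - s) 0) =
        ∫⁻ x in Icc (-π) π, ENNReal.ofReal (max (f x - s) 0) :=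
    ofReal_integral_eq_lintegral_ofReal
      (hf.sub (integrableOn_const (C := s) measure_Icc_lt_top.ne)).pos_part
      (ae_of_all _ fun _ => le_max_right _ _)
  rw [← ofReal_integral hg, ← ofReal_integral hh]
  exact ENNReal.ofReal_le_ofReal (integral_max_sub_zero_le_of_starFn_le hg hh hstar s)
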